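/- arXiv:2011.12811 — 2 statements merged into one kernel-verified Lean document; each statement's English description precedes it below -/
import Mathlib

section
/- (Abstraction soundness step) Under the hypotheses of Theorem 1, if x₁ ∈ q̂₁ and x₂ = x(τ, x₁, u) ∈ q̂₂ for some quantization regions q̂₁, q̂₂ and u ∈ U₂(q̂₁), then q̂₂ ∩ (x(τ, q₁, u) + [−θ e^{Lτ}‖q₁‖, θ e^{Lτ}‖q₁‖]ⁿ) ≠ ∅, i.e., q̂₂ is a transition successor of q̂₁ under u in the abstraction. -/
/-- Abstraction soundness step: if `x₁` lies in the region of `q₁`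
(so `‖x₁ − q₁‖ ≤ θ‖q₁‖`) and `x₂ = x(τ,x₁,u)` lies in the region `S = q̂₂`,
then `q̂₂` intersects `x(τ,q₁,u) + [−θe^{Lτ}‖q₁‖, θe^{Lτ}‖q₁‖]ⁿ`, i.e. `q̂₂` is
an abstract `u`-successor of `q̂₁`. -/
theorem abstraction_soundness_step
    {n : ℕ} {U : Type*}
    (η τ L θ : ℝ) (hη : η ∈ Set.Ioo (0:ℝ) 1) (hτ : 0 < τ) (hL : 0 < L)
    (hθ : θ = η / (1 - η))
    (flow : ℝ → (Fin n → ℝ) → U → (Fin n → ℝ)) (u : U)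
    (x₁ q₁ x₂ : Fin n → ℝ) (S : Set (Fin n → ℝ))
    (hx₁ : ‖x₁ - q₁‖ ≤ θ * ‖q₁‖)
    (hflow : ‖flow τ x₁ u - flow τ q₁ u‖ ≤ Real.exp (L * τ) * ‖x₁ - q₁‖)
    (hx₂ : x₂ = flow τ x₁ u) (hx₂S : x₂ ∈ S) :
    (S ∩ {y | ∀ i, |y i - flow τ q₁ u i| ≤ θ * Real.exp (L * τ) * ‖q₁‖}).Nonempty := by
  refine ⟨x₂, hx₂S, fun i => ?_⟩
  have h1 : |x₂ i - flow τ q₁ u i| ≤ ‖x₂ - flow τ q₁ u‖ := by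
    have := norm_le_pi_norm (x₂ - flow τ q₁ u) i
    simpa using this
  have h2 : ‖x₂ - flow τ q₁ u‖ ≤ Real.exp (L * τ) * (θ * ‖q₁‖) := by
    rw [hx₂]
    exact hflow.trans (by nlinarith [Real.exp_pos (L * τ), hx₁])
  nlinarith [h1, h2]
end

section
/- (Theorem 2, safety refinement) Let F : X₁ → X₂ be a function that is a feedback refinement relation from T₁ to T₂, and suppose the safe sets satisfy: O₂ ⊆ X₂ is an abstraction of O₁ ⊆ X₁, meaning F⁻¹(O₂) ⊆ O₁ (identifying outputs with states via identity output maps). If C₁ : X₂ → 2^{U₂} is a safety controller for T₂ with respect to O₂, then C : X₁ → 2^{U₁} defined by C(x) := C₁(F(x)) is a safety controller for T₁ with respect to O₁. -/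
/-- A transition system `(X, X⁰, U, Δ)` (output map omitted; it plays no role
in feedback refinement relations). -/
structure TransSys (X U : Type*) where
  init : Set X
  inputs : Set U
  tr : X → U → Set X

/-- The set of enabled inputs at a state. -/
def TransSys.enab {X U : Type*} (T : TransSys X U) (x : X) : Set U :=
  {u ∈ T.inputs | (T.tr x u).Nonempty}

/-- `F` is a feedback refinement relation from `T₁` to `T₂`. -/
def IsFRR {X₁ X₂ U : Type*} (T₁ : TransSys X₁ U) (T₂ : TransSys X₂ U)
    (F : Set (X₁ × X₂)) : Prop :=
  ∀ x₁ x₂, (x₁, x₂) ∈ F →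
    T₂.enab x₂ ⊆ T₁.enab x₁ ∧
    ∀ u ∈ T₂.enab x₂, ∀ x₁' ∈ T₁.tr x₁ u,
      {y | (x₁', y) ∈ F} ⊆ T₂.tr x₂ u


/-- `C` is a safety controller for `T` with safe (state) set `O`
(Definition 8, with identity output map): `C` is well-defined, and on its
domain the state is safe and all controlled successors stay in the domain. -/
def IsSafetyController {X U : Type*} (T : TransSys X U) (O : Set X)
    (C : X → Set U) : Prop :=
  (∀ x, C x ⊆ T.enab x) ∧
  ∀ x, (C x).Nonempty → x ∈ O ∧ ∀ u ∈ C x, T.tr x u ⊆ {y | (C y).Nonempty}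

/-- Theorem 2 (safety refinement): if `F : X₁ → X₂` is a feedback refinement
relation from `T₁` to `T₂`, the abstract safe set satisfies
`F⁻¹(O₂) ⊆ O₁`, and `C₁` is a safety controller for `T₂` w.r.t. `O₂`, then
`C(x) := C₁(F x)` is a safety controller for `T₁` w.r.t. `O₁`. -/
theorem safety_controller_refinement {X₁ X₂ U : Type*}
    (T₁ : TransSys X₁ U) (T₂ : TransSys X₂ U) (hU : T₂.inputs ⊆ T₁.inputs)
    (F : X₁ → X₂) (hF : IsFRR T₁ T₂ {p | p.2 = F p.1})
    (O₁ : Set X₁) (O₂ : Set X₂) (hO : ∀ x, F x ∈ O₂ → x ∈ O₁)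
    (C₁ : X₂ → Set U) (hC₁ : IsSafetyController T₂ O₂ C₁) :
    IsSafetyController T₁ O₁ (fun x => C₁ (F x)) := by
  obtain ⟨hwd, hsafe⟩ := hC₁
  constructor
  · intro x
    exact (hwd (F x)).trans (hF x (F x) rfl).1
  · intro x hx
    obtain ⟨hxO, hstep⟩ := hsafe (F x) hx
    refine ⟨hO x hxO, ?_⟩
    intro u hu x' hx'
    have henab : u ∈ T₂.enab (F x) := hwd (F x) hu
    have : F x' ∈ T₂.tr (F x) u := (hF x (F x) rfl).2 u henab x' hx' (show F x' ∈ {y | (x', y) ∈ {p : X₁ × X₂ | p.2 = F p.1}} from rfl)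
    exact hstep u hu this
end
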